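/- arXiv:2512.06832 — 2 statements merged into one kernel-verified Lean document; each statement's English description precedes it below -/
import Mathlib

section
/- If r is an ε'-FPO on X and ε' < ε, then the ε-truncation r_ε is an ε-FPO on X. -/
/-- A linear and complete residuated lattice: a complete linear order carrying a
commutative monoid structure whose unit `1` is the greatest element, together with a
residuum satisfying the adjunction property. -/
class ResiduatedLattice (L : Type*) extends CompleteLinearOrder L, CommMonoid L where
  res : L → L → L
  adjunction : ∀ x y z : L, x * y ≤ z ↔ x ≤ res y z
  one_eq_top : (1 : L) = ⊤

variable {L : Type*} [ResiduatedLattice L]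

/-- `x ≤_ε y` iff `x ≤ y` or `x ≤ ε`. -/
def leE (ε x y : L) : Prop := x ≤ y ∨ x ≤ ε

/-- `x =_ε y` iff `x ≤_ε y` and `y ≤_ε x`. -/
def eqE (ε x y : L) : Prop := leE ε x y ∧ leE ε y x

/-- `x ⊗_ε y` is `x ⊗ y` if `x ⊗ y > ε`, and `ε` otherwise. -/
def mulE (ε x y : L) : L := if ε < x * y then x * y else ε

/-- `x →_ε y := (x ∨ ε) → (y ∨ ε)`. -/
def resE (ε x y : L) : L := ResiduatedLattice.res (x ⊔ ε) (y ⊔ ε)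

/-- Composition of fuzzy relations: `(r ∘ s)(a,b) = sup_c r(a,c) ⊗ s(c,b)`. -/
noncomputable def relComp {X : Type*} (r s : X → X → L) : X → X → L :=
  fun a b => ⨆ c, r a c * s c b

/-- `ε`-composition of fuzzy relations:
`(r ∘_ε s)(a,b) = ⋁_ε { r(a,c) ⊗_ε s(c,b) : c ∈ X }`. -/
noncomputable def relCompE {X : Type*} (ε : L) (r s : X → X → L) : X → X → L :=
  fun a b => (⨆ c, mulE ε (r a c) (s c b)) ⊔ ε

/-- The `ε`-truncation of a fuzzy relation. -/
def truncRel {X : Type*} (ε : L) (r : X → X → L) : X → X → L :=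
  fun a b => if ε < r a b then r a b else ε

/-- A fuzzy `ε`-pre-order (`ε`-FPO) on `X`: a fuzzy relation that is reflexive,
`ε`-transitive, and equal to its own `ε`-truncation. -/
def IsEFPO {X : Type*} (ε : L) (r : X → X → L) : Prop :=
  (∀ x, r x x = 1) ∧
  (∀ a b, leE ε (relCompE ε r r a b) (r a b)) ∧
  truncRel ε r = r

/-!
Since `L` is linear, the `ε`-truncation is `r ⊔ ε`, so it is idempotent and keeps `r x x = 1 = ⊤`.
For `ε`-transitivity only the terms `r(a,c) ⊗ r(c,b) > ε` of the composition matter; both factors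
are then untouched by the truncation because `x ⊗ y ≤ x, y`, and since `ε' ≤ ε` the same term
appears in `r ∘_ε' r`. It cannot lie below `ε'`, so `ε'`-transitivity of `r` bounds it by `r(a,b)`.
-/

namespace ResiduatedLattice

variable {L : Type*} [ResiduatedLattice L]

theorem mul_le_mul_right_of_le {x x' : L} (h : x ≤ x') (y : L) : x * y ≤ x' * y :=
  (adjunction x y _).2 <| h.trans <| (adjunction x' y _).1 le_rfl

theorem mul_le_left (x y : L) : x * y ≤ x := by
  simpa only [mul_comm y x, one_mul] using
    mul_le_mul_right_of_le (show y ≤ 1 from one_eq_top (L := L) ▸ le_top) x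

theorem mul_le_right (x y : L) : x * y ≤ y :=
  mul_comm y x ▸ mul_le_left y x

end ResiduatedLattice

open ResiduatedLattice

section

variable {L : Type*} [ResiduatedLattice L] {X : Type*}

theorem truncRel_apply_eq_sup (ε : L) (r : X → X → L) (a b : X) :
    truncRel ε r a b = r a b ⊔ ε := by
  unfold truncRel
  split_ifs with h
  · exact (sup_eq_left.2 h.le).symm
  · exact (sup_eq_right.2 (not_lt.1 h)).symm

theorem le_truncRel (ε : L) (r : X → X → L) (a b : X) : ε ≤ truncRel ε r a b :=
  truncRel_apply_eq_sup ε r a b ▸ le_sup_right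

theorem truncRel_apply_of_lt {ε : L} {r : X → X → L} {a b : X} (h : ε < truncRel ε r a b) :
    truncRel ε r a b = r a b := by
  unfold truncRel at h ⊢
  split_ifs at h ⊢
  · rfl
  · exact absurd h (lt_irrefl ε)

theorem truncRel_truncRel (ε : L) (r : X → X → L) :
    truncRel ε (truncRel ε r) = truncRel ε r := by
  funext a b
  simp only [truncRel_apply_eq_sup, sup_assoc, sup_idem]

theorem truncRel_refl {ε : L} {r : X → X → L} (hr : ∀ x, r x x = 1) (x : X) :
    truncRel ε r x x = 1 := by
  rw [truncRel_apply_eq_sup, hr, one_eq_top, top_sup_eq]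

theorem mul_le_relCompE_of_lt {ε : L} {r s : X → X → L} {a b c : X}
    (h : ε < r a c * s c b) : r a c * s c b ≤ relCompE ε r s a b := by
  have hmul : mulE ε (r a c) (s c b) = r a c * s c b := if_pos h
  exact hmul ▸ (le_iSup (fun c => mulE ε (r a c) (s c b)) c).trans le_sup_left

theorem mul_le_of_transE {ε : L} {r : X → X → L}
    (htrans : ∀ a b, leE ε (relCompE ε r r a b) (r a b)) {a b c : X}
    (h : ε < r a c * r c b) : r a c * r c b ≤ r a b := by
  have hcomp := mul_le_relCompE_of_lt h
  rcases htrans a b with hle | hle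
  · exact hcomp.trans hle
  · exact absurd (hcomp.trans hle) h.not_ge

theorem truncRel_transE {ε ε' : L} {r : X → X → L}
    (htrans : ∀ a b, leE ε' (relCompE ε' r r a b) (r a b)) (hle : ε' ≤ ε) (a b : X) :
    leE ε (relCompE ε (truncRel ε r) (truncRel ε r) a b) (truncRel ε r a b) := by
  refine Or.inl (sup_le (iSup_le fun c => ?_) (le_truncRel ε r a b))
  unfold mulE
  split_ifs with h
  · have hac := truncRel_apply_of_lt (h.trans_le (mul_le_left _ _))
    have hcb := truncRel_apply_of_lt (h.trans_le (mul_le_right _ _))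
    rw [hac, hcb] at h ⊢
    calc r a c * r c b ≤ r a b := mul_le_of_transE htrans (hle.trans_lt h)
      _ ≤ truncRel ε r a b := truncRel_apply_eq_sup ε r a b ▸ le_sup_left
  · exact le_truncRel ε r a b

end

theorem stmt_13 {X : Type*} (ε ε' : L) (r : X → X → L)
    (h : IsEFPO ε' r) (hlt : ε' < ε) :
    IsEFPO ε (truncRel ε r) :=
  ⟨truncRel_refl h.1, truncRel_transE h.2.1 hlt.le, truncRel_truncRel ε r⟩
end

section
/- Let A = ⟨Q, Σ, I, δ, F⟩ be a fuzzy automaton over a linear complete residuated lattice and ε ∈ L. The greatest right ε-invariance on A exists and equals ⋀_ε { F_w /_ε F_w : w ∈ Σ* }, where (F_w /_ε F_w)(p,q) := (F_w(q) →_ε F_w(p)). Moreover, this greatest right ε-invariance is an ε-FPO on Q. -/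
variable {L : Type*} [ResiduatedLattice L]

/-- A fuzzy automaton over `L` with state set `Q` and alphabet `S`. -/
structure FuzzyAutomaton (L : Type*) (Q S : Type*) where
  I : Q → L
  δ : Q → S → Q → L
  F : Q → L

open scoped Classical in
/-- The fuzzy relation `δ_w` of a word `w`. -/
noncomputable def deltaWord {Q S : Type*} (M : FuzzyAutomaton L Q S) :
    List S → Q → Q → L
  | [] => fun p q => if p = q then (1 : L) else ⊥
  | σ :: u => fun p q => ⨆ r, M.δ p σ r * deltaWord M u r q

/-- `F_w := δ_w ∘ F`. -/
noncomputable def Fword {Q S : Type*} (M : FuzzyAutomaton L Q S) (w : List S) : Q → L :=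
  fun q => ⨆ p, deltaWord M w q p * M.F p

/-- `Z` is a right `ε`-invariance on `M`: `Z` is reflexive and `Z ∘ F_w =_ε F_w`
for every word `w`. -/
noncomputable def RightEInv {Q S : Type*} (M : FuzzyAutomaton L Q S) (ε : L)
    (Z : Q → Q → L) : Prop :=
  (∀ q, Z q q = 1) ∧
  ∀ w : List S, ∀ q, eqE ε (⨆ p, Z q p * Fword M w p) (Fword M w q)

/-- `⋀_ε { F_w /_ε F_w : w ∈ Σ* }`, where `(F_w /_ε F_w)(p,q) = (F_w(q) →_ε F_w(p))`. -/
noncomputable def greatestRInv {Q S : Type*} (M : FuzzyAutomaton L Q S) (ε : L) :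
    Q → Q → L := fun p q =>
  let v := ⨅ w : List S, resE ε (Fword M w q) (Fword M w p)
  if ε < v then v else ε

/-!
Over a linear lattice, `x ≤_ε y` just says `x ≤ y ⊔ ε`, and the `ε`-truncated meet
`G p q = (⋀_w (F_w q →_ε F_w p)) ⊔ ε` is characterised by adjunction:
`z ≤ G p q` iff `z ⊗ (F_w q ⊔ ε) ≤ F_w p ⊔ ε` for every word `w`.
Reflexivity, right `ε`-invariance, maximality among right `ε`-invariances and
`ε`-transitivity of `G` are each a single instance of this characterisation.
-/

namespace ResiduatedLattice

theorem le_one (x : L) : x ≤ 1 := one_eq_top (L := L) ▸ le_top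

instance : IsOrderedMonoid L where
  mul_le_mul_left a b hab c :=
    (adjunction a c (b * c)).2 (hab.trans ((adjunction b c (b * c)).1 le_rfl))

theorem mul_sup_le_sup_of_mul_le {z a b ε : L} (h : z * a ≤ b ⊔ ε) :
    z * (a ⊔ ε) ≤ b ⊔ ε := by
  rcases le_total a ε with haε | hεa
  · rw [sup_eq_right.2 haε]
    exact (mul_le_of_le_one_left' (le_one z)).trans le_sup_right
  · rwa [sup_eq_left.2 hεa]

theorem le_iInf_resE_sup_iff {ι : Type*} {ε z : L} {a b : ι → L} :
    z ≤ (⨅ i, resE ε (a i) (b i)) ⊔ ε ↔ ∀ i, z * (a i ⊔ ε) ≤ b i ⊔ ε := by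
  constructor
  · intro h i
    rcases le_sup_iff.1 h with hz | hz
    · exact (adjunction _ _ _).2 (hz.trans (iInf_le _ i))
    · exact ((mul_le_of_le_one_right' (le_one _)).trans hz).trans le_sup_right
  · intro h
    exact le_sup_of_le_left (le_iInf fun i => (adjunction _ _ _).1 (h i))

end ResiduatedLattice

open ResiduatedLattice

theorem ite_lt_eq_sup {α : Type*} [LinearOrder α] (ε v : α) :
    (if ε < v then v else ε) = v ⊔ ε := by
  split_ifs with h
  · exact (sup_eq_left.2 h.le).symm
  · exact (sup_eq_right.2 (not_lt.1 h)).symm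

theorem leE_iff_le_sup {ε x y : L} : leE ε x y ↔ x ≤ y ⊔ ε := le_sup_iff.symm

theorem isEFPO_of_mul_le {X : Type*} {ε : L} {r : X → X → L} (hrefl : ∀ x, r x x = 1)
    (hε : ∀ a b, ε ≤ r a b) (htrans : ∀ a b c, r a b * r b c ≤ r a c) : IsEFPO ε r := by
  refine ⟨hrefl, fun a b => Or.inl (sup_le (iSup_le fun c => ?_) (hε a b)), ?_⟩
  · exact (ite_lt_eq_sup _ _).trans_le (sup_le (htrans a c b) (hε a b))
  · funext a b
    exact (ite_lt_eq_sup _ _).trans (sup_eq_left.2 (hε a b))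

section FuzzyAutomaton

variable {Q S : Type*} {M : FuzzyAutomaton L Q S} {ε : L}

theorem rightEInv_iff {Z : Q → Q → L} :
    RightEInv M ε Z ↔
      (∀ q, Z q q = 1) ∧ ∀ w p q, Z p q * Fword M w q ≤ Fword M w p ⊔ ε := by
  constructor
  · rintro ⟨hrefl, hinv⟩
    exact ⟨hrefl, fun w p q =>
      (le_iSup (fun r => Z p r * Fword M w r) q).trans (leE_iff_le_sup.1 (hinv w p).1)⟩
  · rintro ⟨hrefl, hle⟩
    refine ⟨hrefl, fun w p => ⟨leE_iff_le_sup.2 (iSup_le (hle w p)), Or.inl ?_⟩⟩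
    exact le_iSup_of_le p (by rw [hrefl, one_mul])

theorem le_greatestRInv_iff {z : L} {p q : Q} :
    z ≤ greatestRInv M ε p q ↔ ∀ w, z * (Fword M w q ⊔ ε) ≤ Fword M w p ⊔ ε := by
  rw [greatestRInv, ite_lt_eq_sup]
  exact le_iInf_resE_sup_iff

theorem greatestRInv_mul_le (p q : Q) (w : List S) :
    greatestRInv M ε p q * (Fword M w q ⊔ ε) ≤ Fword M w p ⊔ ε :=
  le_greatestRInv_iff.1 le_rfl w

theorem eps_le_greatestRInv (p q : Q) : ε ≤ greatestRInv M ε p q := by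
  rw [greatestRInv, ite_lt_eq_sup]
  exact le_sup_right

theorem greatestRInv_self (q : Q) : greatestRInv M ε q q = 1 :=
  le_antisymm (le_one _) (le_greatestRInv_iff.2 fun _ => (one_mul _).le)

theorem greatestRInv_mul_greatestRInv_le (p c q : Q) :
    greatestRInv M ε p c * greatestRInv M ε c q ≤ greatestRInv M ε p q :=
  le_greatestRInv_iff.2 fun w => by
    rw [mul_assoc]
    exact (mul_le_mul_right (greatestRInv_mul_le c q w) _).trans (greatestRInv_mul_le p c w)

end FuzzyAutomaton

theorem stmt_18 {Q S : Type*} (M : FuzzyAutomaton L Q S) (ε : L) :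
    RightEInv M ε (greatestRInv M ε) ∧
    (∀ Z : Q → Q → L, RightEInv M ε Z → ∀ p q, Z p q ≤ greatestRInv M ε p q) ∧
    IsEFPO ε (greatestRInv M ε) := by
  refine ⟨rightEInv_iff.2 ⟨greatestRInv_self, fun w p q => ?_⟩, fun Z hZ p q => ?_,
    isEFPO_of_mul_le greatestRInv_self eps_le_greatestRInv greatestRInv_mul_greatestRInv_le⟩
  · exact (mul_le_mul_right le_sup_left _).trans (greatestRInv_mul_le p q w)
  · exact le_greatestRInv_iff.2 fun w => mul_sup_le_sup_of_mul_le ((rightEInv_iff.1 hZ).2 w p q)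
end
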